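/- Let q ≥ 1 be an integer, let c > 0 and x be real numbers, and let R > 2c. Then the contour integral (1/(2πi)) ∮_{|z|=R} e^{−xz − z²/4} / (z^q (z + 2c)) dz (whose value is independent of the choice of R > 2c) equals (−1)^q · ( e^{2cx − c²}/(2c)^q − Σ_{p=0}^{q−1} (1/(2c)^{p+1}) · H_{q−1−p}(x)/(2^{q−1−p}·(q−1−p)!) ). -/

import Mathlib

open Real Nat

/-- Physicists' Hermite polynomial
`H_n(x) = n! · Σ_{j=0}^{⌊n/2⌋} (−1)^j (2x)^{n−2j}/(j!·(n−2j)!)`. -/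
noncomputable def hermiteH (n : ℕ) (x : ℝ) : ℝ :=
  (n ! : ℝ) * ∑ j ∈ Finset.range (n / 2 + 1),
    (-1 : ℝ) ^ j * (2 * x) ^ (n - 2 * j) / ((j ! : ℝ) * ((n - 2 * j)! : ℝ))

/-!
Split `1 / (z ^ q * (z + 2 c))` into partial fractions. The simple pole at `-2 c` contributes
`E(-2 c) = exp (2 c x - c ^ 2)` by the Cauchy integral formula, and the poles at `0` contribute the
Taylor coefficients of `E z = exp (-x z - z ^ 2 / 4)` by the Cauchy formula for derivatives. These
coefficients are Hermite polynomials: `E⁽ⁿ⁾ z = (-1/2) ^ n H_n (x + z / 2) E z`, which follows by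
induction from `H_{n+1} = 2 y H_n - 2 n H_{n-1}` and `H_n' = 2 n H_{n-1}`. The explicit sum defining
`hermiteH` satisfies the same recurrence.
-/

open Finset

noncomputable def hermiteTerm (x : ℝ) (n j : ℕ) : ℝ :=
  if 2 * j ≤ n then (n ! : ℝ) * (-1) ^ j * (2 * x) ^ (n - 2 * j) / (j ! * (n - 2 * j)!) else 0

theorem hermiteH_eq_sum_hermiteTerm {n K : ℕ} (hK : n / 2 < K) (x : ℝ) :
    hermiteH n x = ∑ j ∈ range K, hermiteTerm x n j := by
  have hfilter : {j ∈ range K | 2 * j ≤ n} = range (n / 2 + 1) := by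
    ext j; simp only [mem_filter, mem_range]; omega
  simp only [hermiteTerm, ← sum_filter, hfilter, hermiteH, mul_sum, mul_div_assoc, mul_assoc]

theorem hermiteTerm_add_two_zero (x : ℝ) (n : ℕ) :
    hermiteTerm x (n + 2) 0 = 2 * x * hermiteTerm x (n + 1) 0 := by
  simp only [hermiteTerm, zero_le, if_true, mul_zero, Nat.sub_zero, factorial_zero, pow_zero,
    cast_one, one_mul, mul_one]
  rw [factorial_succ (n + 1), pow_succ]
  field_simp

theorem hermiteTerm_add_two_succ (x : ℝ) (n j : ℕ) :
    hermiteTerm x (n + 2) (j + 1)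
      = 2 * x * hermiteTerm x (n + 1) (j + 1) - 2 * (n + 1) * hermiteTerm x n j := by
  rcases lt_trichotomy (2 * j) n with h | h | h
  · obtain ⟨m, rfl⟩ : ∃ m, n = 2 * j + m + 1 := ⟨n - 2 * j - 1, by omega⟩
    simp only [hermiteTerm, show 2 * (j + 1) ≤ 2 * j + m + 1 + 2 by omega,
      show 2 * (j + 1) ≤ 2 * j + m + 1 + 1 by omega, show 2 * j ≤ 2 * j + m + 1 by omega, if_true,
      show 2 * j + m + 1 + 2 - 2 * (j + 1) = m + 1 by omega,
      show 2 * j + m + 1 + 1 - 2 * (j + 1) = m by omega,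
      show 2 * j + m + 1 - 2 * j = m + 1 by omega]
    rw [factorial_succ (2 * j + m + 1 + 1), factorial_succ (2 * j + m + 1), factorial_succ j,
      factorial_succ m]
    push_cast
    field_simp
    ring
  · subst h
    simp only [hermiteTerm, show 2 * (j + 1) ≤ 2 * j + 2 by omega,
      show ¬ 2 * (j + 1) ≤ 2 * j + 1 by omega, le_refl, if_true, if_false,
      show 2 * j + 2 - 2 * (j + 1) = 0 by omega, Nat.sub_self]
    rw [factorial_succ (2 * j + 1), factorial_succ (2 * j), factorial_succ j]
    push_cast
    field_simp
    ring
  · simp only [hermiteTerm, show ¬ 2 * (j + 1) ≤ n + 2 by omega,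
      show ¬ 2 * (j + 1) ≤ n + 1 by omega, show ¬ 2 * j ≤ n by omega, if_false]
    ring

theorem hermiteH_add_two (n : ℕ) (x : ℝ) :
    hermiteH (n + 2) x = 2 * x * hermiteH (n + 1) x - 2 * (n + 1) * hermiteH n x := by
  rw [hermiteH_eq_sum_hermiteTerm (K := n / 2 + 2) (by omega),
    hermiteH_eq_sum_hermiteTerm (K := n / 2 + 2) (by omega),
    hermiteH_eq_sum_hermiteTerm (K := n / 2 + 1) (by omega),
    sum_range_succ' (hermiteTerm x (n + 2)), sum_range_succ' (hermiteTerm x (n + 1)),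
    hermiteTerm_add_two_zero, mul_add, mul_sum, mul_sum]
  simp only [hermiteTerm_add_two_succ, sum_sub_distrib]
  ring

noncomputable def complexHermite : ℕ → ℂ → ℂ
  | 0, _ => 1
  | 1, y => 2 * y
  | n + 2, y => 2 * y * complexHermite (n + 1) y - 2 * (n + 1) * complexHermite n y

-- For `n = 0` the truncated `n - 1` is harmless: it is multiplied by `n`.
theorem complexHermite_succ (n : ℕ) (y : ℂ) :
    complexHermite (n + 1) y = 2 * y * complexHermite n y - 2 * n * complexHermite (n - 1) y := by
  cases n with
  | zero => simp [complexHermite]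
  | succ n => simp [complexHermite]

theorem hasDerivAt_complexHermite :
    ∀ (n : ℕ) (y : ℂ), HasDerivAt (complexHermite n) (2 * n * complexHermite (n - 1) y) y
  | 0, y => by simpa [complexHermite] using hasDerivAt_const y (1 : ℂ)
  | 1, y => by simpa [complexHermite] using (hasDerivAt_id' y).const_mul (2 : ℂ)
  | n + 2, y => by
    have h := ((hasDerivAt_id' y).const_mul (2 : ℂ)).mul (hasDerivAt_complexHermite (n + 1) y)
      |>.sub ((hasDerivAt_complexHermite n y).const_mul (2 * (n + 1) : ℂ))
    refine h.congr_deriv ?_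
    rw [Nat.add_sub_cancel, show n + 2 - 1 = n + 1 from rfl, complexHermite_succ n]
    push_cast
    ring

theorem ofReal_hermiteH : ∀ (n : ℕ) (x : ℝ), (hermiteH n x : ℂ) = complexHermite n x
  | 0, x => by simp [hermiteH, complexHermite]
  | 1, x => by simp [hermiteH, complexHermite]
  | n + 2, x => by
    rw [hermiteH_add_two]
    push_cast
    rw [ofReal_hermiteH (n + 1), ofReal_hermiteH n]
    rfl

theorem hasDerivAt_complexHermite_mul_exp (a : ℂ) (n : ℕ) (z : ℂ) :
    HasDerivAt
      (fun z ↦ (-1 / 2) ^ n * complexHermite n (a + z / 2) * Complex.exp (-a * z - z ^ 2 / 4))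
      ((-1 / 2) ^ (n + 1) * complexHermite (n + 1) (a + z / 2) *
        Complex.exp (-a * z - z ^ 2 / 4)) z := by
  have hu : HasDerivAt (fun z : ℂ ↦ a + z / 2) (1 / 2) z := by
    simpa using ((hasDerivAt_id' z).div_const 2).const_add a
  have hexp : HasDerivAt (fun z : ℂ ↦ -a * z - z ^ 2 / 4) (-a - z / 2) z := by
    refine (((hasDerivAt_id' z).const_mul (-a)).sub
      ((hasDerivAt_pow 2 z).div_const 4)).congr_deriv ?_
    ring
  refine ((((hasDerivAt_complexHermite n _).comp z hu).const_mul ((-1 / 2 : ℂ) ^ n)).mul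
    hexp.cexp).congr_deriv ?_
  rw [complexHermite_succ, Function.comp_apply]
  ring

theorem iteratedDeriv_exp_neg_mul_sub_sq (a : ℂ) (n : ℕ) :
    iteratedDeriv n (fun z ↦ Complex.exp (-a * z - z ^ 2 / 4))
      = fun z ↦
          (-1 / 2) ^ n * complexHermite n (a + z / 2) * Complex.exp (-a * z - z ^ 2 / 4) := by
  induction n with
  | zero => ext; simp [complexHermite]
  | succ n ih => ext z; rw [iteratedDeriv_succ, ih, (hasDerivAt_complexHermite_mul_exp a n z).deriv]

theorem iteratedDeriv_exp_neg_mul_sub_sq_zero (x : ℝ) (n : ℕ) :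
    iteratedDeriv n (fun z ↦ Complex.exp (-(x : ℂ) * z - z ^ 2 / 4)) 0
      = (-1 / 2) ^ n * hermiteH n x := by
  rw [iteratedDeriv_exp_neg_mul_sub_sq, ofReal_hermiteH]
  simp

theorem inv_pow_mul_add_eq {K : Type*} [Field K] (q : ℕ) {z w : K} (hz : z ≠ 0) (hw : w ≠ 0)
    (hzw : z + w ≠ 0) :
    (z ^ q * (z + w))⁻¹
      = (-1) ^ q / w ^ q * (z + w)⁻¹ + ∑ p ∈ range q, (-1) ^ p / w ^ (p + 1) * (z ^ (q - p))⁻¹ := by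
  induction q with
  | zero => simp
  | succ q ih =>
    have hsplit : z⁻¹ * (z + w)⁻¹ = w⁻¹ * z⁻¹ - w⁻¹ * (z + w)⁻¹ := by
      field_simp
      ring
    have hterm : ∀ p ∈ range q, (-1) ^ p / w ^ (p + 1) * (z ^ (q + 1 - p))⁻¹
        = z⁻¹ * ((-1) ^ p / w ^ (p + 1) * (z ^ (q - p))⁻¹) := by
      intro p hp
      rw [show q + 1 - p = q - p + 1 by have := mem_range.1 hp; omega, _root_.pow_succ z]
      ring
    rw [_root_.pow_succ' z, mul_assoc, mul_inv, ih, sum_range_succ, sum_congr rfl hterm,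
      ← mul_sum, Nat.add_sub_cancel_left, pow_one]
    linear_combination ((-1) ^ q / w ^ q) * hsplit

open Metric in
theorem circleIntegral_div_pow_mul_add {f : ℂ → ℂ} {R : ℝ} {w : ℂ}
    (hf : DifferentiableOn ℂ f (closedBall 0 R)) (hw : w ≠ 0) (hwR : ‖w‖ < R) (q : ℕ) :
    ∮ z in C(0, R), f z / (z ^ q * (z + w))
      = 2 * π * Complex.I * ((-1) ^ q / w ^ q * f (-w)
          + ∑ p ∈ range q,
              (-1) ^ p / w ^ (p + 1) * (iteratedDeriv (q - 1 - p) f 0 / (q - 1 - p)!)) := by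
  have hR : 0 < R := (norm_nonneg w).trans_lt hwR
  have hsphere : ∀ z ∈ sphere (0 : ℂ) R, z ≠ 0 ∧ z + w ≠ 0 := by
    intro z hz
    rw [mem_sphere_zero_iff_norm] at hz
    refine ⟨by rintro rfl; simp [hR.ne] at hz, fun h ↦ ?_⟩
    rw [eq_neg_of_add_eq_zero_left h, norm_neg] at hz
    exact hwR.ne hz
  have hcont := hf.continuousOn.mono sphere_subset_closedBall
  have hpole : ContinuousOn (fun z ↦ (z - -w)⁻¹ • f z) (sphere 0 R) :=
    ((continuousOn_id.sub continuousOn_const).inv₀ fun z hz ↦ by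
      simpa using (hsphere z hz).2).smul hcont
  have hcenter (k : ℕ) : ContinuousOn (fun z ↦ (1 / (z - 0) ^ (k + 1)) • f z) (sphere 0 R) :=
    (continuousOn_const.div ((continuousOn_id.sub continuousOn_const).pow _) fun z hz ↦ by
      simpa using (hsphere z hz).1).smul hcont
  have hpole_int : CircleIntegrable (fun z ↦ (-1) ^ q / w ^ q * ((z - -w)⁻¹ • f z)) 0 R :=
    (continuousOn_const.mul hpole).circleIntegrable hR.le
  have hcenter_int (a : ℂ) (k : ℕ) :
      CircleIntegrable (fun z ↦ a * ((1 / (z - 0) ^ (k + 1)) • f z)) 0 R :=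
    (continuousOn_const.mul (hcenter k)).circleIntegrable hR.le
  have hsum_int : CircleIntegrable (fun z ↦ ∑ p ∈ range q,
      (-1) ^ p / w ^ (p + 1) * ((1 / (z - 0) ^ (q - 1 - p + 1)) • f z)) 0 R :=
    (continuousOn_finsetSum _ fun p _ ↦ continuousOn_const.mul (hcenter _)).circleIntegrable hR.le
  calc ∮ z in C(0, R), f z / (z ^ q * (z + w))
      = ∮ z in C(0, R), ((-1) ^ q / w ^ q * ((z - -w)⁻¹ • f z)
          + ∑ p ∈ range q, (-1) ^ p / w ^ (p + 1) * ((1 / (z - 0) ^ (q - 1 - p + 1)) • f z)) := by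
        refine circleIntegral.integral_congr hR.le fun z hz ↦ ?_
        obtain ⟨hz0, hzw⟩ := hsphere z hz
        rw [div_eq_mul_inv, inv_pow_mul_add_eq q hz0 hw hzw, mul_add, mul_sum]
        simp only [smul_eq_mul, sub_neg_eq_add, sub_zero, one_div]
        congr 1
        · ring
        · refine sum_congr rfl fun p hp ↦ ?_
          rw [show q - 1 - p + 1 = q - p by have := mem_range.1 hp; omega]
          ring
    _ = _ := by
        rw [circleIntegral.integral_add hpole_int hsum_int,
          circleIntegral.integral_fun_sum fun p _ ↦ hcenter_int _ _,
          circleIntegral.integral_const_mul,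
          hf.circleIntegral_sub_inv_smul (by rwa [mem_ball_zero_iff, norm_neg])]
        simp only [circleIntegral.integral_const_mul,
          hf.circleIntegral_one_div_sub_center_pow_smul hR]
        simp only [smul_eq_mul, mul_add, mul_sum]
        congr 1
        · ring
        · refine sum_congr rfl fun p _ ↦ ?_
          ring

theorem stmt_14_general (q : ℕ) (c x : ℝ) (hc : 0 < c)
    (R : ℝ) (hR : 2 * c < R) :
    (1 / (2 * π * Complex.I)) *
        (∮ z in C(0, R), Complex.exp (-(x : ℂ) * z - z ^ 2 / 4) / (z ^ q * (z + 2 * c)))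
      = (((-1 : ℝ) ^ q *
          (Real.exp (2 * c * x - c ^ 2) / (2 * c) ^ q
            - ∑ p ∈ Finset.range q,
                (1 / (2 * c) ^ (p + 1)) * hermiteH (q - 1 - p) x
                  / (2 ^ (q - 1 - p) * ((q - 1 - p)! : ℝ)) ) : ℝ) : ℂ) := by
  have hw : (2 * c : ℂ) ≠ 0 := by exact_mod_cast (mul_pos two_pos hc).ne'
  have hwR : ‖(2 * c : ℂ)‖ < R := by
    rwa [← Complex.ofReal_ofNat, ← Complex.ofReal_mul, Complex.norm_of_nonneg (by positivity)]
  have hE : Differentiable ℂ fun z : ℂ ↦ Complex.exp (-(x : ℂ) * z - z ^ 2 / 4) := by fun_prop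
  rw [circleIntegral_div_pow_mul_add hE.differentiableOn hw hwR, one_div,
    inv_mul_cancel_left₀ Complex.two_pi_I_ne_zero]
  simp only [iteratedDeriv_exp_neg_mul_sub_sq_zero]
  push_cast
  rw [show -(x : ℂ) * -(2 * c) - (-(2 * c)) ^ 2 / 4 = 2 * c * x - c ^ 2 by ring, mul_sub, mul_sum,
    sub_eq_add_neg _ (∑ p ∈ range q, _), ← sum_neg_distrib]
  congr 1
  · ring
  refine sum_congr rfl fun p hp ↦ ?_
  obtain ⟨k, rfl⟩ : ∃ k, q = p + k + 1 := ⟨q - 1 - p, by have := mem_range.1 hp; omega⟩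
  rw [show p + k + 1 - 1 - p = k by omega, div_pow]
  field_simp
  ring

theorem stmt_14 (q : ℕ) (hq : 1 ≤ q) (c x : ℝ) (hc : 0 < c)
    (R : ℝ) (hR : 2 * c < R) :
    (1 / (2 * π * Complex.I)) *
        (∮ z in C(0, R), Complex.exp (-(x : ℂ) * z - z ^ 2 / 4) / (z ^ q * (z + 2 * c)))
      = (((-1 : ℝ) ^ q *
          (Real.exp (2 * c * x - c ^ 2) / (2 * c) ^ q
            - ∑ p ∈ Finset.range q,
                (1 / (2 * c) ^ (p + 1)) * hermiteH (q - 1 - p) x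
                  / (2 ^ (q - 1 - p) * ((q - 1 - p)! : ℝ)) ) : ℝ) : ℂ) :=
  stmt_14_general q c x hc R hR
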